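/- Let G ⊆ ℝⁿ be an open convex domain, g : G → ℝ a continuously differentiable convex function, ‖·‖ a norm on ℝⁿ, and γ > 0. Assume that for every x ∈ G there exists r_x > 0 such that the ball V_x = {u : ‖u−x‖ < r_x} is contained in G and g(v) ≤ g(u) + ⟨g'(u), v−u⟩ + (γ/2)‖u−v‖² for all u, v ∈ V_x. Then ‖g'(y) − g'(z)‖_* ≤ γ‖y−z‖ for all y, z ∈ G. -/

import Mathlib

open scoped RealInnerProductSpace
open Real Matrix

/-- `N` is a norm on the real vector space `E`. -/
def IsNorm {E : Type*} [AddCommGroup E] [Module ℝ E] (N : E → ℝ) : Prop :=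
  (∀ x, 0 ≤ N x) ∧ (∀ x, N x = 0 ↔ x = 0) ∧
    (∀ (c : ℝ) (x), N (c • x) = |c| * N x) ∧ ∀ x y, N (x + y) ≤ N x + N y

/-- The conjugate (dual) norm of `N`: `‖y‖_* = sup {⟨y,x⟩ : N x ≤ 1}`. -/
noncomputable def dualNorm {E : Type*} [NormedAddCommGroup E] [InnerProductSpace ℝ E]
    (N : E → ℝ) (y : E) : ℝ :=
  sSup {r | ∃ x, N x ≤ 1 ∧ r = ⟪y, x⟫}

/-- `N` is a `κ`-smooth norm: its square `Φ` is `C¹` and satisfies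
`Φ(x+h) ≤ Φ(x) + ⟨∇Φ(x),h⟩ + κ Φ(h)`. -/
def IsSmoothNorm {E : Type*} [NormedAddCommGroup E] [InnerProductSpace ℝ E] [CompleteSpace E]
    (κ : ℝ) (N : E → ℝ) : Prop :=
  IsNorm N ∧ ContDiff ℝ 1 (fun x => N x ^ 2) ∧
    ∀ x h, N (x + h) ^ 2 ≤
      N x ^ 2 + ⟪gradient (fun z => N z ^ 2) x, h⟫ + κ * N h ^ 2

/-- `N` is a `(κ,ς)`-regular norm: within factor `ς` of a `κ`-smooth norm. -/
def IsRegularNorm {E : Type*} [NormedAddCommGroup E] [InnerProductSpace ℝ E] [CompleteSpace E]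
    (κ ς : ℝ) (N : E → ℝ) : Prop :=
  ∃ M : E → ℝ, IsSmoothNorm κ M ∧ ∀ x, ς⁻¹ * M x ≤ N x ∧ N x ≤ ς * M x

/-!
Fix `u, v` in a ball `V` on which the descent inequality holds and a direction `s`, and step from
`v` in direction `s` by the distance `N (u - v)` to a point `w ∈ V`. Adding the descent inequalities
from `u` to `v` and from `v` to `w` to the convexity inequality `g u + ⟪g' u, w - u⟫ ≤ g w` leaves
`⟪g' u - g' v, s⟫ ≤ γ N(u - v) N(s)`, so `g'` is locally `γ`-Lipschitz. Along the segment from `z`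
to `y` these local bounds add up to a global one (real induction on `[0, 1]`), and taking `N s ≤ 1`
gives the dual-norm bound.
-/

open Set Filter Topology

lemma image_sub_le_mul_sub_of_eventually_abs_sub_le {φ : ℝ → ℝ} {a b L : ℝ} (hab : a ≤ b)
    (hloc : ∀ c ∈ Icc a b, ∀ᶠ t in 𝓝 c, |φ t - φ c| ≤ L * |t - c|) :
    φ b - φ a ≤ L * (b - a) := by
  have hcont : ContinuousOn φ (Icc a b) := fun c hc => by
    have hlim : Tendsto (fun t => L * |t - c|) (𝓝 c) (𝓝 0) := by
      simpa using ((continuous_id.sub (continuous_const (y := c))).abs.const_mul L).tendsto c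
    refine ContinuousAt.continuousWithinAt (tendsto_iff_norm_sub_tendsto_zero.2 ?_)
    exact squeeze_zero' (.of_forall fun _ => norm_nonneg _) (hloc c hc) hlim
  have hslope : ∀ x ∈ Ico a b, ∀ r, L < r → ∃ᶠ z in 𝓝[>] x, slope φ x z < r := by
    intro x hx r hr
    refine Eventually.frequently ?_
    filter_upwards [nhdsWithin_le_nhds (hloc x (Ico_subset_Icc_self hx)), self_mem_nhdsWithin]
      with z hz (hxz : x < z)
    rw [abs_of_pos (sub_pos.2 hxz)] at hz
    rw [slope_def_field, div_lt_iff₀ (sub_pos.2 hxz)]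
    nlinarith [le_abs_self (φ z - φ x)]
  have hB : ∀ x ∈ Ico a b, HasDerivWithinAt (fun t => φ a + L * (t - a)) L (Ici x) x := by
    intro x _
    simpa using (((hasDerivAt_id x).sub_const a).const_mul L).const_add (φ a) |>.hasDerivWithinAt
  have := image_le_of_liminf_slope_right_le_deriv_boundary hcont (by simp) (by fun_prop) hB hslope
    ⟨hab, le_rfl⟩
  linarith

namespace IsNorm

variable {E : Type*} [AddCommGroup E] [Module ℝ E] {N : E → ℝ}

lemma nonneg (hN : IsNorm N) (x : E) : 0 ≤ N x := hN.1 x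

lemma eq_zero_iff (hN : IsNorm N) {x : E} : N x = 0 ↔ x = 0 := hN.2.1 x

lemma map_zero (hN : IsNorm N) : N 0 = 0 := hN.eq_zero_iff.2 rfl

lemma map_smul (hN : IsNorm N) (c : ℝ) (x : E) : N (c • x) = |c| * N x := hN.2.2.1 c x

lemma map_neg (hN : IsNorm N) (x : E) : N (-x) = N x := by
  simpa using hN.map_smul (-1) x

lemma map_div_smul_le (hN : IsNorm N) (w s : E) : N ((N w / N s) • s) ≤ N w := by
  obtain hs | hs := eq_or_ne (N s) 0
  · simpa [hs, hN.map_zero] using hN.nonneg w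
  rw [hN.map_smul, abs_of_nonneg (div_nonneg (hN.nonneg w) (hN.nonneg s)), div_mul_cancel₀ _ hs]

end IsNorm

section

variable {E : Type*} [NormedAddCommGroup E] [InnerProductSpace ℝ E]

lemma dualNorm_le_of_forall_inner_le {N : E → ℝ} (hN : IsNorm N) {y : E} {c : ℝ}
    (h : ∀ x, N x ≤ 1 → ⟪y, x⟫ ≤ c) : dualNorm N y ≤ c :=
  csSup_le ⟨0, 0, by simp [hN.map_zero]⟩ fun _ ⟨x, hx, hr⟩ => hr ▸ h x hx

lemma ConvexOn.add_inner_le_of_hasGradientAt [CompleteSpace E] {s : Set E} {f : E → ℝ}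
    {f' x y : E} (hf : ConvexOn ℝ s f) (hx : x ∈ s) (hy : y ∈ s) (hd : HasGradientAt f f' x) :
    f x + ⟪f', y - x⟫ ≤ f y := by
  have hline : ConvexOn ℝ (AffineMap.lineMap (k := ℝ) x y ⁻¹' s)
      (f ∘ AffineMap.lineMap (k := ℝ) x y) := hf.comp_affineMap _
  have hderiv : HasDerivAt (f ∘ AffineMap.lineMap (k := ℝ) x y) ⟪f', y - x⟫ 0 := by
    have := hd.hasFDerivAt.comp_hasDerivAt_of_eq (0 : ℝ) AffineMap.hasDerivAt_lineMap
      (AffineMap.lineMap_apply_zero x y).symm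
    simpa [InnerProductSpace.toDual_apply_apply] using this
  have := hline.le_slope_of_hasDerivAt (by simpa using hx) (by simpa using hy) one_pos hderiv
  simp only [slope_def_field, Function.comp_apply, AffineMap.lineMap_apply_one,
    AffineMap.lineMap_apply_zero, sub_zero, div_one] at this
  linarith

lemma Convex.inner_sub_le_of_local_bound {G : Set E} (hGc : Convex ℝ G) {N : E → ℝ} (hN : IsNorm N)
    {F : E → E} {K : ℝ}
    (hloc : ∀ x ∈ G, ∃ δ > 0, ∀ u, N (u - x) < δ → ∀ s, |⟪F u - F x, s⟫| ≤ K * N (u - x) * N s)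
    {y z : E} (hy : y ∈ G) (hz : z ∈ G) (s : E) :
    ⟪F y - F z, s⟫ ≤ K * N (y - z) * N s := by
  have := image_sub_le_mul_sub_of_eventually_abs_sub_le zero_le_one
    (φ := fun t => ⟪F (z + t • (y - z)), s⟫) (L := K * N (y - z) * N s) ?_
  · simpa [inner_sub_left] using this
  intro c hc
  obtain ⟨δ, hδ, hδloc⟩ := hloc _ (hGc.add_smul_sub_mem hz hy hc)
  have hnear : ∀ᶠ t in 𝓝 c, |t - c| * N (y - z) < δ :=
    (Continuous.continuousAt (by fun_prop) : ContinuousAt (fun t => |t - c| * N (y - z)) c)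
      |>.eventually_lt continuousAt_const (by simpa using hδ)
  filter_upwards [hnear] with t ht
  have hNdiff : N (z + t • (y - z) - (z + c • (y - z))) = |t - c| * N (y - z) := by
    rw [add_sub_add_left_eq_sub, ← sub_smul, hN.map_smul]
  have := hδloc _ (hNdiff ▸ ht) s
  rw [hNdiff, inner_sub_left] at this
  linarith

def IsDescentOn (N : E → ℝ) (γ : ℝ) (g : E → ℝ) (g' : E → E) (V : Set E) : Prop :=
  ∀ u ∈ V, ∀ v ∈ V, g v ≤ g u + ⟪g' u, v - u⟫ + γ / 2 * N (u - v) ^ 2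

lemma IsDescentOn.inner_sub_le {N : E → ℝ} (hN : IsNorm N) {γ : ℝ} {g : E → ℝ} {g' : E → E}
    {V : Set E} (hD : IsDescentOn N γ g g' V) {u v s : E} (hu : u ∈ V) (hv : v ∈ V)
    (hw : v + (N (u - v) / N s) • s ∈ V)
    (hgrad : g u + ⟪g' u, v + (N (u - v) / N s) • s - u⟫ ≤ g (v + (N (u - v) / N s) • s)) :
    ⟪g' u - g' v, s⟫ ≤ γ * N (u - v) * N s := by
  obtain rfl | hs := eq_or_ne s 0
  · simp [hN.map_zero]
  obtain rfl | hne := eq_or_ne u v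
  · simp [hN.map_zero]
  have hNs : 0 < N s := (hN.nonneg s).lt_of_ne' (hN.eq_zero_iff.not.2 hs)
  have hNuv : 0 < N (u - v) := (hN.nonneg _).lt_of_ne' (hN.eq_zero_iff.not.2 (sub_ne_zero.2 hne))
  set τ := N (u - v) / N s
  have hτ : 0 < τ := div_pos hNuv hNs
  have hτs : τ * N s = N (u - v) := div_mul_cancel₀ _ hNs.ne'
  have hdesc_vw := hD v hv _ hw
  have hdesc_uv := hD u hu v hv
  have hNvw : N (v - (v + τ • s)) = N (u - v) := by
    rw [sub_add_cancel_left, hN.map_neg, hN.map_smul, abs_of_pos hτ, hτs]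
  rw [add_sub_cancel_left, hNvw, real_inner_smul_right] at hdesc_vw
  rw [add_sub_right_comm, inner_add_right, real_inner_smul_right] at hgrad
  have key : τ * ⟪g' u - g' v, s⟫ ≤ τ * (γ * N (u - v) * N s) := by
    have hsq : τ * (γ * N (u - v) * N s) = γ * N (u - v) ^ 2 := by rw [← hτs]; ring
    rw [inner_sub_left, hsq]
    linarith
  exact le_of_mul_le_mul_left key hτ

lemma IsDescentOn.abs_inner_sub_le [CompleteSpace E] {N : E → ℝ} (hN : IsNorm N) {γ : ℝ}
    {g : E → ℝ} {g' : E → E} {G : Set E} (hconv : ConvexOn ℝ G g)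
    (hg : ∀ x ∈ G, HasGradientAt g (g' x) x) {x : E} {r : ℝ} (hsub : {u | N (u - x) < r} ⊆ G)
    (hD : IsDescentOn N γ g g' {u | N (u - x) < r}) {u : E} (hu : N (u - x) < r) (s : E) :
    |⟪g' u - g' x, s⟫| ≤ γ * N (u - x) * N s := by
  have hx : N (x - x) < r := by
    rw [sub_self, hN.map_zero]
    exact (hN.nonneg _).trans_lt hu
  have key : ∀ s, ⟪g' u - g' x, s⟫ ≤ γ * N (u - x) * N s := by
    intro s
    have hw : N (x + (N (u - x) / N s) • s - x) < r := by
      rw [add_sub_cancel_left]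
      exact (hN.map_div_smul_le _ _).trans_lt hu
    exact hD.inner_sub_le hN hu hx hw
      (hconv.add_inner_le_of_hasGradientAt (hsub hu) (hsub hw) (hg u (hsub hu)))
  have hneg := key (-s)
  rw [inner_neg_right, hN.map_neg] at hneg
  exact abs_le.2 ⟨by linarith, key s⟩

end

theorem stmt_6_general {n : ℕ} (G : Set (EuclideanSpace ℝ (Fin n)))
    (hGc : Convex ℝ G)
    (g : EuclideanSpace ℝ (Fin n) → ℝ)
    (g' : EuclideanSpace ℝ (Fin n) → EuclideanSpace ℝ (Fin n))
    (hg : ∀ x ∈ G, HasGradientAt g (g' x) x)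
    (hconv : ConvexOn ℝ G g)
    (N : EuclideanSpace ℝ (Fin n) → ℝ) (hN : IsNorm N)
    (γ : ℝ) (hγ : 0 < γ)
    (hball : ∀ x ∈ G, ∃ r > (0 : ℝ), {u | N (u - x) < r} ⊆ G ∧
      ∀ u ∈ {u | N (u - x) < r}, ∀ v ∈ {u | N (u - x) < r},
        g v ≤ g u + ⟪g' u, v - u⟫ + γ / 2 * N (u - v) ^ 2) :
    ∀ y ∈ G, ∀ z ∈ G, dualNorm N (g' y - g' z) ≤ γ * N (y - z) := by
  have hloc : ∀ x ∈ G, ∃ δ > 0, ∀ u, N (u - x) < δ → ∀ s,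
      |⟪g' u - g' x, s⟫| ≤ γ * N (u - x) * N s := by
    intro x hx
    obtain ⟨r, hr, hsub, hD⟩ := hball x hx
    exact ⟨r, hr, fun u hu s => IsDescentOn.abs_inner_sub_le hN hconv hg hsub hD hu s⟩
  intro y hy z hz
  refine dualNorm_le_of_forall_inner_le hN fun s hs => ?_
  calc ⟪g' y - g' z, s⟫ ≤ γ * N (y - z) * N s := hGc.inner_sub_le_of_local_bound hN hloc hy hz s
    _ ≤ γ * N (y - z) := mul_le_of_le_one_right (mul_nonneg hγ.le (hN.nonneg _)) hs

/-- if a `C¹` convex function on an open convex domain satisfies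
the local descent-lemma inequality on small `‖·‖`-balls around each point, then
its gradient is globally `γ`-Lipschitz on `G` w.r.t. `(‖·‖, ‖·‖_*)`. -/
theorem stmt_6 {n : ℕ} (G : Set (EuclideanSpace ℝ (Fin n)))
    (hGo : IsOpen G) (hGc : Convex ℝ G)
    (g : EuclideanSpace ℝ (Fin n) → ℝ)
    (g' : EuclideanSpace ℝ (Fin n) → EuclideanSpace ℝ (Fin n))
    (hg : ∀ x ∈ G, HasGradientAt g (g' x) x) (hg'c : ContinuousOn g' G)
    (hconv : ConvexOn ℝ G g)
    (N : EuclideanSpace ℝ (Fin n) → ℝ) (hN : IsNorm N)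
    (γ : ℝ) (hγ : 0 < γ)
    (hball : ∀ x ∈ G, ∃ r > (0 : ℝ), {u | N (u - x) < r} ⊆ G ∧
      ∀ u ∈ {u | N (u - x) < r}, ∀ v ∈ {u | N (u - x) < r},
        g v ≤ g u + ⟪g' u, v - u⟫ + γ / 2 * N (u - v) ^ 2) :
    ∀ y ∈ G, ∀ z ∈ G, dualNorm N (g' y - g' z) ≤ γ * N (y - z) :=
  stmt_6_general G hGc g g' hg hconv N hN γ hγ hball
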